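/- arXiv:2301.09355 — 5 statements merged into one kernel-verified Lean document; each statement's English description precedes it below -/
import Mathlib

section
/- Let m, g, λ be real with m ≠ 0, and let q, p, s : ℝ → ℝ be differentiable satisfying q' = (p - 2λs)/m, p' = -mg·e^{2λq} + 2λp(p - 2λs)/m, and s' = p(p-2λs)/m - (p-2λs)²/(2m) - (mg/(2λ))(e^{2λq} - 1) (with λ ≠ 0). Then q'' = λ(q')² - g. -/
/-!
The velocity is `q' = u / m` with `u = p - 2λs`. In `u' = p' - 2λs'` the terms `±2λ p u / m`
cancel and so do the exponentials, leaving the closed equation `u' = λ u² / m - m g`;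
dividing by `m` gives `q'' = λ (q')² - g`.
-/

lemma hasDerivAt_contact_momentum {m g lam : ℝ} (hm : m ≠ 0) (hlam : lam ≠ 0) {q p s : ℝ → ℝ}
    {t : ℝ}
    (hp : HasDerivAt p
      (-(m * g * Real.exp (2 * lam * q t)) + 2 * lam * p t * (p t - 2 * lam * s t) / m) t)
    (hs : HasDerivAt s
      (p t * (p t - 2 * lam * s t) / m - (p t - 2 * lam * s t) ^ 2 / (2 * m)
        - (m * g / (2 * lam)) * (Real.exp (2 * lam * q t) - 1)) t) :
    HasDerivAt (fun t => p t - 2 * lam * s t) (lam * (p t - 2 * lam * s t) ^ 2 / m - m * g) t := by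
  refine (hp.sub (hs.const_mul (2 * lam))).congr_deriv ?_
  field_simp
  ring

/-- The contact Hamiltonian equations of the parachute system imply `q'' = λ (q')² - g`. -/
theorem parachute_equation_from_contact (m g lam : ℝ) (hm : m ≠ 0) (hlam : lam ≠ 0)
    (q p s : ℝ → ℝ)
    (hq : ∀ t, HasDerivAt q ((p t - 2 * lam * s t) / m) t)
    (hp : ∀ t, HasDerivAt p
      (-(m * g * Real.exp (2 * lam * q t)) + 2 * lam * p t * (p t - 2 * lam * s t) / m) t)
    (hs : ∀ t, HasDerivAt s
      (p t * (p t - 2 * lam * s t) / m - (p t - 2 * lam * s t) ^ 2 / (2 * m)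
        - (m * g / (2 * lam)) * (Real.exp (2 * lam * q t) - 1)) t) :
    ∀ t, deriv (deriv q) t = lam * (deriv q t) ^ 2 - g := by
  have hdq : deriv q = fun t => (p t - 2 * lam * s t) / m := funext fun t => (hq t).deriv
  intro t
  rw [hdq, ((hasDerivAt_contact_momentum hm hlam (hp t) (hs t)).div_const m).deriv]
  field_simp
end

section
/- Let m, g, λ be real with m ≠ 0, and suppose q : ℝ → ℝ is twice differentiable with q'' = λ(q')² - g. If G(t) = m·q'(t)·q(t) is bounded on [0,∞) and the time-averages ⟨m(q')²⟩, ⟨mgq⟩, ⟨mλq(q')²⟩ exist, then ⟨m(q')²/2⟩ = (1/2)⟨mgq⟩ - (1/2)⟨mλ q (q')²⟩. -/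
open Filter

/-- Lagrangian virial theorem for the parachute equation:
`⟨m(q')²/2⟩ = (1/2)⟨m g q⟩ - (1/2)⟨m λ q (q')²⟩`. -/
theorem virial_parachute (m g lam : ℝ) (hm : m ≠ 0)
    (q : ℝ → ℝ) (hq : ∀ t, DifferentiableAt ℝ q t)
    (hq2 : ∀ t, DifferentiableAt ℝ (deriv q) t)
    (heom : ∀ t, deriv (deriv q) t = lam * (deriv q t) ^ 2 - g)
    (hbdd : ∃ M : ℝ, ∀ t : ℝ, 0 ≤ t → |m * deriv q t * q t| ≤ M)
    (A B C : ℝ)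
    (hA : Tendsto (fun T : ℝ => (∫ t in (0:ℝ)..T, m * (deriv q t) ^ 2) / T) atTop (nhds A))
    (hB : Tendsto (fun T : ℝ => (∫ t in (0:ℝ)..T, m * g * q t) / T) atTop (nhds B))
    (hC : Tendsto (fun T : ℝ => (∫ t in (0:ℝ)..T, m * lam * q t * (deriv q t) ^ 2) / T)
      atTop (nhds C)) :
    A / 2 = B / 2 - C / 2 := by
  obtain ⟨M, hM⟩ := hbdd
  set G : ℝ → ℝ := fun t => m * deriv q t * q t with hGdef
  set f : ℝ → ℝ := fun t =>
    m * (deriv q t) ^ 2 + m * lam * q t * (deriv q t) ^ 2 - m * g * q t with hfdef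
  have hdq : Differentiable ℝ q := hq
  have hdq2 : Differentiable ℝ (deriv q) := hq2
  have hcq : Continuous q := hdq.continuous
  have hcq' : Continuous (deriv q) := hdq2.continuous
  have c1 : Continuous fun t => m * (deriv q t) ^ 2 := continuous_const.mul (hcq'.pow 2)
  have c2 : Continuous fun t => m * lam * q t * (deriv q t) ^ 2 :=
    (continuous_const.mul hcq).mul (hcq'.pow 2)
  have c3 : Continuous fun t => m * g * q t := continuous_const.mul hcq
  have hG : ∀ t, HasDerivAt G (f t) t := by
    intro t
    have h1 : HasDerivAt (fun s => m * deriv q s) (m * deriv (deriv q) t) t :=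
      ((hq2 t).hasDerivAt).const_mul m
    have h2 : HasDerivAt (fun s => m * deriv q s * q s)
        (m * deriv (deriv q) t * q t + m * deriv q t * deriv q t) t := h1.mul (hq t).hasDerivAt
    convert h2 using 1
    rw [heom t]; ring
  have hcf : Continuous f := (c1.add c2).sub c3
  have hint : ∀ T : ℝ, ∫ t in (0:ℝ)..T, f t = G T - G 0 := fun T =>
    intervalIntegral.integral_eq_sub_of_hasDerivAt (fun t _ => hG t)
      (hcf.intervalIntegrable 0 T)
  -- integrability of pieces
  have i1 : ∀ T : ℝ, IntervalIntegrable (fun t => m * (deriv q t) ^ 2) MeasureTheory.volume 0 T :=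
    fun T => c1.intervalIntegrable 0 T
  have i2 : ∀ T : ℝ, IntervalIntegrable (fun t => m * lam * q t * (deriv q t) ^ 2)
      MeasureTheory.volume 0 T :=
    fun T => c2.intervalIntegrable 0 T
  have i3 : ∀ T : ℝ, IntervalIntegrable (fun t => m * g * q t) MeasureTheory.volume 0 T :=
    fun T => c3.intervalIntegrable 0 T
  have hsplit : ∀ T : ℝ, (∫ t in (0:ℝ)..T, f t)
      = (∫ t in (0:ℝ)..T, m * (deriv q t) ^ 2)
        + (∫ t in (0:ℝ)..T, m * lam * q t * (deriv q t) ^ 2)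
        - (∫ t in (0:ℝ)..T, m * g * q t) := by
    intro T
    rw [← intervalIntegral.integral_add (i1 T) (i2 T),
      ← intervalIntegral.integral_sub ((i1 T).add (i2 T)) (i3 T)]
  -- limit of (∫ f)/T is A + C - B
  have hlim1 : Tendsto (fun T : ℝ => (∫ t in (0:ℝ)..T, f t) / T) atTop (nhds (A + C - B)) := by
    have := ((hA.add hC).sub hB)
    refine this.congr (fun T => ?_)
    rw [hsplit T]; ring
  -- limit of (G T - G 0)/T is 0
  have hlim2 : Tendsto (fun T : ℝ => (∫ t in (0:ℝ)..T, f t) / T) atTop (nhds 0) := by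
    have hb : ∀ᶠ T : ℝ in atTop, |(∫ t in (0:ℝ)..T, f t) / T| ≤ (2 * M) / T := by
      filter_upwards [eventually_ge_atTop (1:ℝ)] with T hT
      have hT0 : (0:ℝ) < T := lt_of_lt_of_le one_pos hT
      rw [hint T, abs_div, abs_of_pos hT0]
      gcongr
      have h1 := hM T (le_of_lt hT0)
      have h2 := hM 0 le_rfl
      calc |G T - G 0| ≤ |G T| + |G 0| := abs_sub _ _
        _ ≤ M + M := add_le_add h1 h2
        _ = 2 * M := by ring
    have h0 : Tendsto (fun T : ℝ => (2 * M) / T) atTop (nhds 0) := by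
      simpa [div_eq_mul_inv] using tendsto_inv_atTop_zero.const_mul (2 * M)
    exact squeeze_zero_norm' (by simpa [Real.norm_eq_abs, abs_div] using hb) h0
  have := tendsto_nhds_unique hlim1 hlim2
  linarith
end

section
/- Let h : ℝ^{2n+1} → ℝ be C¹, let (s(t), q(t), p(t)) be a solution of the contact Hamiltonian equations s' = Σᵢ pᵢ ∂h/∂pᵢ - h, qᵢ' = ∂h/∂pᵢ, pᵢ' = -(∂h/∂qᵢ + pᵢ ∂h/∂s) defined on [0,∞), and suppose G(t) = Σᵢ qᵢ(t) pᵢ(t) is bounded and the time averages of {G,h}_PB and G·∂h/∂s along the trajectory exist. Then ⟨{G,h}_PB⟩ = ⟨G·∂h/∂s⟩. -/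
/-- Points of `ℝ^{2n+1}` in Darboux coordinates `(s, q, p)`. -/
abbrev CPt (n : ℕ) := ℝ × (Fin n → ℝ) × (Fin n → ℝ)

/-- Partial derivative with respect to `s`. -/
noncomputable def pds {n : ℕ} (f : CPt n → ℝ) (x : CPt n) : ℝ :=
  deriv (fun a => f (a, x.2.1, x.2.2)) x.1

/-- Partial derivative with respect to `qᵢ`. -/
noncomputable def pdq {n : ℕ} (f : CPt n → ℝ) (i : Fin n) (x : CPt n) : ℝ :=
  deriv (fun a => f (x.1, Function.update x.2.1 i a, x.2.2)) (x.2.1 i)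

/-- Partial derivative with respect to `pᵢ`. -/
noncomputable def pdp {n : ℕ} (f : CPt n → ℝ) (i : Fin n) (x : CPt n) : ℝ :=
  deriv (fun a => f (x.1, x.2.1, Function.update x.2.2 i a)) (x.2.2 i)

open Filter

lemma update_hasDerivAt {n : ℕ} (v : Fin n → ℝ) (i : Fin n) (a : ℝ) :
    HasDerivAt (fun a : ℝ => Function.update v i a) (Pi.single i 1) a := by
  rw [hasDerivAt_pi]
  intro j
  by_cases hj : j = i
  · subst hj
    simp only [Function.update_self, Pi.single_eq_same]
    exact hasDerivAt_id a
  · simp only [Function.update_of_ne hj, Pi.single_eq_of_ne hj]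
    exact hasDerivAt_const a _

lemma pds_eq {n : ℕ} (h : CPt n → ℝ) (hh : ContDiff ℝ 1 h) (x : CPt n) :
    pds h x = fderiv ℝ h x (1, 0, 0) := by
  have hc : HasDerivAt (fun a : ℝ => ((a, x.2.1, x.2.2) : CPt n))
      ((1 : ℝ), (0 : Fin n → ℝ), (0 : Fin n → ℝ)) x.1 :=
    (hasDerivAt_id x.1).prodMk ((hasDerivAt_const _ _).prodMk (hasDerivAt_const _ _))
  have := ((hh.differentiable one_ne_zero) _).hasFDerivAt.comp_hasDerivAt x.1 hc
  simpa [pds, Function.comp_def] using this.deriv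

lemma pdq_eq {n : ℕ} (h : CPt n → ℝ) (hh : ContDiff ℝ 1 h) (i : Fin n) (x : CPt n) :
    pdq h i x = fderiv ℝ h x (0, Pi.single i 1, 0) := by
  have hc : HasDerivAt (fun a : ℝ => ((x.1, Function.update x.2.1 i a, x.2.2) : CPt n))
      ((0 : ℝ), (Pi.single i 1 : Fin n → ℝ), (0 : Fin n → ℝ)) (x.2.1 i) :=
    (hasDerivAt_const _ _).prodMk ((update_hasDerivAt _ _ _).prodMk (hasDerivAt_const _ _))
  have := ((hh.differentiable one_ne_zero) _).hasFDerivAt.comp_hasDerivAt (x.2.1 i) hc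
  simp only [Function.update_eq_self] at this
  simpa [pdq, Function.comp_def] using this.deriv

lemma pdp_eq {n : ℕ} (h : CPt n → ℝ) (hh : ContDiff ℝ 1 h) (i : Fin n) (x : CPt n) :
    pdp h i x = fderiv ℝ h x (0, 0, Pi.single i 1) := by
  have hc : HasDerivAt (fun a : ℝ => ((x.1, x.2.1, Function.update x.2.2 i a) : CPt n))
      ((0 : ℝ), (0 : Fin n → ℝ), (Pi.single i 1 : Fin n → ℝ)) (x.2.2 i) :=
    (hasDerivAt_const _ _).prodMk ((hasDerivAt_const _ _).prodMk (update_hasDerivAt _ _ _))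
  have := ((hh.differentiable one_ne_zero) _).hasFDerivAt.comp_hasDerivAt (x.2.2 i) hc
  simp only [Function.update_eq_self] at this
  simpa [pdp, Function.comp_def] using this.deriv

lemma fderiv_apply_cont {n : ℕ} (h : CPt n → ℝ) (hh : ContDiff ℝ 1 h) (v : CPt n) :
    Continuous fun x : CPt n => fderiv ℝ h x v :=
  (hh.continuous_fderiv one_ne_zero).clm_apply continuous_const


/-- Generalized virial theorem for contact Hamiltonian systems:
`⟨{G,h}_PB⟩ = ⟨G ∂h/∂s⟩` along a trajectory with bounded virial `G = Σᵢ qᵢ pᵢ`. -/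
theorem generalized_virial_contact (n : ℕ) (h : CPt n → ℝ) (hh : ContDiff ℝ 1 h)
    (s : ℝ → ℝ) (q p : ℝ → Fin n → ℝ)
    (hs : ∀ t : ℝ, 0 ≤ t →
      HasDerivAt s (∑ i, p t i * pdp h i (s t, q t, p t) - h (s t, q t, p t)) t)
    (hq : ∀ (i : Fin n) (t : ℝ), 0 ≤ t →
      HasDerivAt (fun τ => q τ i) (pdp h i (s t, q t, p t)) t)
    (hp : ∀ (i : Fin n) (t : ℝ), 0 ≤ t →
      HasDerivAt (fun τ => p τ i)
        (-(pdq h i (s t, q t, p t) + p t i * pds h (s t, q t, p t))) t)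
    (hbdd : ∃ M : ℝ, ∀ t : ℝ, 0 ≤ t → |∑ i, q t i * p t i| ≤ M)
    (A B : ℝ)
    (hA : Tendsto (fun T : ℝ =>
      (∫ t in (0:ℝ)..T, ∑ i, (p t i * pdp h i (s t, q t, p t)
          - q t i * pdq h i (s t, q t, p t))) / T) atTop (nhds A))
    (hB : Tendsto (fun T : ℝ =>
      (∫ t in (0:ℝ)..T, (∑ i, q t i * p t i) * pds h (s t, q t, p t)) / T)
      atTop (nhds B)) :
    A = B := by
  -- trajectory continuity
  have hcont : ContinuousOn (fun t => ((s t, q t, p t) : CPt n)) (Set.Ici (0:ℝ)) := by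
    intro t ht
    exact (((hs t ht).continuousAt).prodMk
      (((continuousAt_pi.mpr fun i => (hq i t ht).continuousAt)).prodMk
        (continuousAt_pi.mpr fun i => (hp i t ht).continuousAt))).continuousWithinAt
  have hqc : ∀ i, ContinuousOn (fun t => q t i) (Set.Ici (0:ℝ)) :=
    fun i t ht => ((hq i t ht).continuousAt).continuousWithinAt
  have hpc : ∀ i, ContinuousOn (fun t => p t i) (Set.Ici (0:ℝ)) :=
    fun i t ht => ((hp i t ht).continuousAt).continuousWithinAt
  have hX : ∀ i, ContinuousOn (fun t => pdp h i (s t, q t, p t)) (Set.Ici (0:ℝ)) := by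
    intro i
    have he : (fun t => pdp h i (s t, q t, p t))
        = fun t => fderiv ℝ h (s t, q t, p t) (0, 0, Pi.single i 1) :=
      funext fun t => pdp_eq h hh i _
    rw [he]
    exact (fderiv_apply_cont h hh _).comp_continuousOn hcont
  have hY : ∀ i, ContinuousOn (fun t => pdq h i (s t, q t, p t)) (Set.Ici (0:ℝ)) := by
    intro i
    have he : (fun t => pdq h i (s t, q t, p t))
        = fun t => fderiv ℝ h (s t, q t, p t) (0, Pi.single i 1, 0) :=
      funext fun t => pdq_eq h hh i _
    rw [he]
    exact (fderiv_apply_cont h hh _).comp_continuousOn hcont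
  have hZ : ContinuousOn (fun t => pds h (s t, q t, p t)) (Set.Ici (0:ℝ)) := by
    have he : (fun t => pds h (s t, q t, p t))
        = fun t => fderiv ℝ h (s t, q t, p t) (1, 0, 0) :=
      funext fun t => pds_eq h hh _
    rw [he]
    exact (fderiv_apply_cont h hh _).comp_continuousOn hcont
  set f1 : ℝ → ℝ := fun t => ∑ i, (p t i * pdp h i (s t, q t, p t)
      - q t i * pdq h i (s t, q t, p t)) with hf1def
  set f2 : ℝ → ℝ := fun t => (∑ i, q t i * p t i) * pds h (s t, q t, p t) with hf2def
  have hf1c : ContinuousOn f1 (Set.Ici (0:ℝ)) := by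
    apply continuousOn_finset_sum
    intro i _
    exact ((hpc i).mul (hX i)).sub ((hqc i).mul (hY i))
  have hf2c : ContinuousOn f2 (Set.Ici (0:ℝ)) :=
    (continuousOn_finset_sum _ fun i _ => (hqc i).mul (hpc i)).mul hZ
  -- derivative of G
  have hG : ∀ t : ℝ, 0 ≤ t →
      HasDerivAt (fun τ => ∑ i, q τ i * p τ i) (f1 t - f2 t) t := by
    intro t ht
    have hd := HasDerivAt.fun_sum (u := Finset.univ) (A := fun i τ => q τ i * p τ i)
      (fun i _ => ((hq i t ht).mul (hp i t ht)))
    refine hd.congr_deriv ?_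
    simp only [hf1def, hf2def, Finset.sum_mul, ← Finset.sum_sub_distrib]
    apply Finset.sum_congr rfl
    intro i _
    ring
  -- FTC and splitting
  have hint1 : ∀ T : ℝ, 0 ≤ T → IntervalIntegrable f1 MeasureTheory.volume 0 T := by
    intro T hT
    exact (hf1c.mono (by rw [Set.uIcc_of_le hT]; exact Set.Icc_subset_Ici_self)).intervalIntegrable
  have hint2 : ∀ T : ℝ, 0 ≤ T → IntervalIntegrable f2 MeasureTheory.volume 0 T := by
    intro T hT
    exact (hf2c.mono (by rw [Set.uIcc_of_le hT]; exact Set.Icc_subset_Ici_self)).intervalIntegrable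
  have key : ∀ T : ℝ, 0 ≤ T →
      (∫ t in (0:ℝ)..T, f1 t) - (∫ t in (0:ℝ)..T, f2 t)
        = (∑ i, q T i * p T i) - (∑ i, q 0 i * p 0 i) := by
    intro T hT
    rw [← intervalIntegral.integral_sub (hint1 T hT) (hint2 T hT)]
    apply intervalIntegral.integral_eq_sub_of_hasDerivAt
    · intro t ht
      rw [Set.uIcc_of_le hT] at ht
      exact hG t ht.1
    · exact (hint1 T hT).sub (hint2 T hT)
  -- limit argument
  obtain ⟨M, hM⟩ := hbdd
  have hAB : Tendsto (fun T : ℝ =>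
      (∫ t in (0:ℝ)..T, f1 t) / T - (∫ t in (0:ℝ)..T, f2 t) / T)
      atTop (nhds (A - B)) := hA.sub hB
  have h0 : Tendsto (fun T : ℝ =>
      (∫ t in (0:ℝ)..T, f1 t) / T - (∫ t in (0:ℝ)..T, f2 t) / T)
      atTop (nhds 0) := by
    refine squeeze_zero_norm' (a := fun T : ℝ => (2 * M) / T) ?_ ?_
    · filter_upwards [eventually_ge_atTop (1:ℝ)] with T hT
      have hT0 : (0:ℝ) < T := lt_of_lt_of_le one_pos hT
      rw [div_sub_div_same, key T hT0.le]
      rw [Real.norm_eq_abs, abs_div, abs_of_pos hT0]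
      have hineq : |(∑ i, q T i * p T i) - (∑ i, q 0 i * p 0 i)| ≤ 2 * M := by
        calc |(∑ i, q T i * p T i) - (∑ i, q 0 i * p 0 i)|
            ≤ |∑ i, q T i * p T i| + |∑ i, q 0 i * p 0 i| := abs_sub _ _
          _ ≤ M + M := add_le_add (hM T hT0.le) (hM 0 le_rfl)
          _ = 2 * M := by ring
      exact div_le_div_of_nonneg_right hineq hT0.le
    · exact tendsto_const_nhds.div_atTop tendsto_id
  have := tendsto_nhds_unique hAB h0
  linarith
end

section
/- Let A, B, C, D, K be real constants and consider the Gierer–Meinhardt system x' = A/(B + y) - Cx, y' = Dx - Ky, with B + y(t) > 0 for all t ≥ 0 and A ≠ 0. If G(t) = x(t)y(t) is bounded on [0,∞) and the time averages of y/(B+y), x², and xy exist, then ⟨y/(B+y)⟩ + (D/A)⟨x²⟩ = ((C+K)/A)⟨xy⟩. -/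
open Filter

/-- Virial-type identity for the Gierer–Meinhardt system:
`⟨y/(B+y)⟩ + (D/A)⟨x²⟩ = ((C+K)/A)⟨xy⟩`. -/
theorem virial_gierer_meinhardt (A B C D K : ℝ) (hA : A ≠ 0)
    (x y : ℝ → ℝ)
    (hpos : ∀ t : ℝ, 0 ≤ t → 0 < B + y t)
    (hx : ∀ t, HasDerivAt x (A / (B + y t) - C * x t) t)
    (hy : ∀ t, HasDerivAt y (D * x t - K * y t) t)
    (hbdd : ∃ M : ℝ, ∀ t : ℝ, 0 ≤ t → |x t * y t| ≤ M)
    (α β γ : ℝ)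
    (hα : Tendsto (fun T : ℝ => (∫ t in (0:ℝ)..T, y t / (B + y t)) / T) atTop (nhds α))
    (hβ : Tendsto (fun T : ℝ => (∫ t in (0:ℝ)..T, x t ^ 2) / T) atTop (nhds β))
    (hγ : Tendsto (fun T : ℝ => (∫ t in (0:ℝ)..T, x t * y t) / T) atTop (nhds γ)) :
    α + (D / A) * β = ((C + K) / A) * γ := by
  obtain ⟨M, hM⟩ := hbdd
  set g : ℝ → ℝ := fun t => x t * y t with hgdef
  have hg : ∀ t, HasDerivAt g
      (A * (y t / (B + y t)) + D * (x t) ^ 2 - (C + K) * (x t * y t)) t := by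
    intro t
    have h : HasDerivAt g ((A / (B + y t) - C * x t) * y t + x t * (D * x t - K * y t)) t :=
      (hx t).mul (hy t)
    convert h using 1
    ring
  have hxc : Continuous x := by
    rw [continuous_iff_continuousAt]; exact fun t => (hx t).continuousAt
  have hyc : Continuous y := by
    rw [continuous_iff_continuousAt]; exact fun t => (hy t).continuousAt
  -- key identity for T ≥ 0
  have key : ∀ T : ℝ, 0 ≤ T →
      A * ((∫ t in (0:ℝ)..T, y t / (B + y t))) + D * (∫ t in (0:ℝ)..T, x t ^ 2)
        - (C + K) * (∫ t in (0:ℝ)..T, x t * y t) = g T - g 0 := by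
    intro T hT
    have huIcc : Set.uIcc (0:ℝ) T = Set.Icc 0 T := Set.uIcc_of_le hT
    have hposT : ∀ t ∈ Set.uIcc (0:ℝ) T, B + y t ≠ 0 := by
      intro t ht
      rw [huIcc] at ht
      exact ne_of_gt (hpos t ht.1)
    have hc1 : ContinuousOn (fun t => y t / (B + y t)) (Set.uIcc (0:ℝ) T) :=
      (hyc.continuousOn.div (continuousOn_const.add hyc.continuousOn) hposT)
    have hi1 : IntervalIntegrable (fun t => y t / (B + y t)) MeasureTheory.volume 0 T :=
      hc1.intervalIntegrable
    have hi2 : IntervalIntegrable (fun t => x t ^ 2) MeasureTheory.volume 0 T :=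
      ((hxc.pow 2).continuousOn).intervalIntegrable
    have hi3 : IntervalIntegrable (fun t => x t * y t) MeasureTheory.volume 0 T :=
      ((hxc.mul hyc).continuousOn).intervalIntegrable
    have hFint : IntervalIntegrable
        (fun t => A * (y t / (B + y t)) + D * (x t) ^ 2 - (C + K) * (x t * y t))
        MeasureTheory.volume 0 T :=
      ((hi1.const_mul A).add (hi2.const_mul D)).sub (hi3.const_mul (C + K))
    have heq := intervalIntegral.integral_eq_sub_of_hasDerivAt
      (fun t _ => hg t) hFint
    rw [← heq]
    rw [intervalIntegral.integral_sub ((hi1.const_mul A).add (hi2.const_mul D))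
        (hi3.const_mul (C + K)),
      intervalIntegral.integral_add (hi1.const_mul A) (hi2.const_mul D),
      intervalIntegral.integral_const_mul, intervalIntegral.integral_const_mul,
      intervalIntegral.integral_const_mul]
  -- limit of (g T - g 0)/T is 0
  have h0 : Tendsto (fun T : ℝ => (g T - g 0) / T) atTop (nhds 0) := by
    have hb : ∀ᶠ T in atTop, ‖(g T - g 0) / T‖ ≤ (2 * |M|) / T := by
      filter_upwards [eventually_ge_atTop (1:ℝ)] with T hT
      have hT0 : (0:ℝ) < T := lt_of_lt_of_le one_pos hT
      have h1 : |g T - g 0| ≤ 2 * |M| := by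
        have := hM T (le_of_lt hT0)
        have h0' := hM 0 le_rfl
        calc |g T - g 0| ≤ |g T| + |g 0| := abs_sub _ _
          _ ≤ M + M := add_le_add this h0'
          _ ≤ |M| + |M| := add_le_add (le_abs_self M) (le_abs_self M)
          _ = 2 * |M| := by ring
      rw [norm_div, Real.norm_eq_abs, Real.norm_eq_abs, abs_of_pos hT0]
      gcongr
    have hlim : Tendsto (fun T : ℝ => (2 * |M|) / T) atTop (nhds 0) :=
      tendsto_const_nhds.div_atTop tendsto_id
    exact squeeze_zero_norm' hb hlim
  -- limit of combination
  have h1 : Tendsto (fun T : ℝ => (g T - g 0) / T) atTop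
      (nhds (A * α + D * β - (C + K) * γ)) := by
    have hcomb : Tendsto (fun T : ℝ =>
        A * ((∫ t in (0:ℝ)..T, y t / (B + y t)) / T)
        + D * ((∫ t in (0:ℝ)..T, x t ^ 2) / T)
        - (C + K) * ((∫ t in (0:ℝ)..T, x t * y t) / T)) atTop
        (nhds (A * α + D * β - (C + K) * γ)) :=
      ((hα.const_mul A).add (hβ.const_mul D)).sub (hγ.const_mul (C + K))
    refine hcomb.congr' ?_
    filter_upwards [eventually_ge_atTop (0:ℝ)] with T hT
    rw [← key T hT]
    ring
  have hzero : A * α + D * β - (C + K) * γ = 0 := tendsto_nhds_unique h1 h0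
  field_simp
  linarith [hzero]
end

section
/- Let L(q, v, s) = m v²/2 - mω²q²/2 - γs with m > 0, and suppose q, s : ℝ → ℝ satisfy the Herglotz (generalized Euler–Lagrange) dynamics: s' = L(q, q', s), q'' = -(ω²q + γq'). Define G(t) = m q'(t) q(t). If G is bounded on [0,∞) and the time averages of m(q')², mω²q², mγqq' exist, then ⟨m(q')²/2⟩ = ⟨mω²q²/2⟩ + (1/2)⟨mγ q q'⟩. -/
open Filter

/-- Contact Lagrangian virial theorem for the damped oscillator:
`⟨m(q')²/2⟩ = ⟨mω²q²/2⟩ + (1/2)⟨mγ q q'⟩` for the Herglotz dynamics of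
`L(q,v,s) = m v²/2 - m ω² q²/2 - γ s`. -/
theorem virial_contact_lagrangian_damped (m ω γ : ℝ) (hm : 0 < m)
    (q s : ℝ → ℝ)
    (hq : ∀ t, DifferentiableAt ℝ q t)
    (hq2 : ∀ t, DifferentiableAt ℝ (deriv q) t)
    (hs : ∀ t, HasDerivAt s
      (m * (deriv q t) ^ 2 / 2 - m * ω ^ 2 * q t ^ 2 / 2 - γ * s t) t)
    (heom : ∀ t, deriv (deriv q) t = -(ω ^ 2 * q t + γ * deriv q t))
    (hbdd : ∃ M : ℝ, ∀ t : ℝ, 0 ≤ t → |m * deriv q t * q t| ≤ M)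
    (A B C : ℝ)
    (hA : Tendsto (fun T : ℝ => (∫ t in (0:ℝ)..T, m * (deriv q t) ^ 2) / T) atTop (nhds A))
    (hB : Tendsto (fun T : ℝ => (∫ t in (0:ℝ)..T, m * ω ^ 2 * q t ^ 2) / T) atTop (nhds B))
    (hC : Tendsto (fun T : ℝ => (∫ t in (0:ℝ)..T, m * γ * q t * deriv q t) / T)
      atTop (nhds C)) :
    A / 2 = B / 2 + C / 2 := by
  obtain ⟨M, hM⟩ := hbdd
  have cq : Continuous q := continuous_iff_continuousAt.mpr fun t => (hq t).continuousAt
  have cq' : Continuous (deriv q) :=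
    continuous_iff_continuousAt.mpr fun t => (hq2 t).continuousAt
  set G : ℝ → ℝ := fun t => m * deriv q t * q t with hGdef
  have hG' : ∀ t, HasDerivAt G
      (m * (deriv q t) ^ 2 - m * ω ^ 2 * q t ^ 2 - m * γ * q t * deriv q t) t := by
    intro t
    have h1 : HasDerivAt (fun u => m * deriv q u * q u)
        ((m * deriv (deriv q) t) * q t + (m * deriv q t) * deriv q t) t := by
      exact (((hq2 t).hasDerivAt.const_mul m).mul (hq t).hasDerivAt)
    convert h1 using 1
    rw [heom t]; ring
  -- integrands are continuous
  have c1 : Continuous fun t => m * (deriv q t) ^ 2 := by continuity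
  have c2 : Continuous fun t => m * ω ^ 2 * q t ^ 2 := by continuity
  have c3 : Continuous fun t => m * γ * q t * deriv q t := by continuity
  have key : ∀ T : ℝ, (∫ t in (0:ℝ)..T, m * (deriv q t) ^ 2)
      - (∫ t in (0:ℝ)..T, m * ω ^ 2 * q t ^ 2)
      - (∫ t in (0:ℝ)..T, m * γ * q t * deriv q t) = G T - G 0 := by
    intro T
    have hftc : (∫ t in (0:ℝ)..T,
        m * (deriv q t) ^ 2 - m * ω ^ 2 * q t ^ 2 - m * γ * q t * deriv q t)
        = G T - G 0 := by
      apply intervalIntegral.integral_eq_sub_of_hasDerivAt (fun t _ => hG' t)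
      exact ((c1.sub c2).sub c3).intervalIntegrable 0 T
    rw [← hftc, intervalIntegral.integral_sub (f := fun t => m * (deriv q t) ^ 2 - m * ω ^ 2 * q t ^ 2) (((c1.sub c2)).intervalIntegrable 0 T)
      (c3.intervalIntegrable 0 T), intervalIntegral.integral_sub
      (c1.intervalIntegrable 0 T) (c2.intervalIntegrable 0 T)]
  -- (G T - G 0)/T tends to 0
  have hg0 : Tendsto (fun T : ℝ => (M + |G 0|) / T) atTop (nhds 0) :=
    tendsto_const_nhds.div_atTop tendsto_id
  have htend : Tendsto (fun T : ℝ => (G T - G 0) / T) atTop (nhds 0) := by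
    apply squeeze_zero_norm' _ hg0
    filter_upwards [eventually_gt_atTop (0 : ℝ)] with T hT
    rw [norm_div, Real.norm_eq_abs, Real.norm_eq_abs, abs_of_pos hT]
    have h1 : |G T - G 0| ≤ M + |G 0| := by
      calc |G T - G 0| ≤ |G T| + |G 0| := abs_sub (G T) (G 0)
        _ ≤ M + |G 0| := by
          have := hM T hT.le
          simp only [hGdef] at *
          linarith
    gcongr
  have hdiff : Tendsto (fun T : ℝ => (G T - G 0) / T) atTop (nhds (A - B - C)) := by
    have : (fun T : ℝ => (G T - G 0) / T)
        = fun T : ℝ => (∫ t in (0:ℝ)..T, m * (deriv q t) ^ 2) / T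
          - (∫ t in (0:ℝ)..T, m * ω ^ 2 * q t ^ 2) / T
          - (∫ t in (0:ℝ)..T, m * γ * q t * deriv q t) / T := by
      funext T
      rw [← sub_div, ← sub_div, key T]
    rw [this]
    exact (hA.sub hB).sub hC
  have : A - B - C = 0 := tendsto_nhds_unique hdiff htend
  linarith
end
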